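/- arXiv:0911.4727 — 3 statements merged into one kernel-verified Lean document; each statement's English description precedes it below -/
import Mathlib

section
/- Let D be a coherent and exchangeable set of gambles on X^N. Then for all gambles f and f' on X^N: (i) f ∈ D if and only if ex^N(f) ∈ D; (ii) if ex^N(f) = ex^N(f'), then f ∈ D if and only if f' ∈ D. -/
variable {X : Type*} [Fintype X] [DecidableEq X] [Nonempty X]

/-- `ex^N(f)`: the uniform average of all permuted versions `π^t f` of `f`,
where `(π^t f)(x) = f(x ∘ π)`. -/
noncomputable def exg {X : Type*} (N : ℕ) (f : (Fin N → X) → ℝ) : (Fin N → X) → ℝ :=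
  fun x => (∑ π : Equiv.Perm (Fin N), f (x ∘ π)) / (N.factorial : ℝ)

/-- `W_{A_N}`: the linear span of the gambles `f - π^t f`, which is the kernel of
the projection operator `ex^N`. -/
def WA (X : Type*) (N : ℕ) : Set ((Fin N → X) → ℝ) := {f | exg N f = 0}

/-- A coherent set of desirable gambles on a set of possibilities `Y`. -/
def Coherent {Y : Type*} (D : Set (Y → ℝ)) : Prop :=
  (0 : Y → ℝ) ∉ D ∧ (∀ f : Y → ℝ, 0 ≤ f → f ≠ 0 → f ∈ D) ∧
  (∀ f ∈ D, ∀ c : ℝ, 0 < c → c • f ∈ D) ∧ ∀ f ∈ D, ∀ g ∈ D, f + g ∈ D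

/-- A set of desirable gambles on `X^N` is exchangeable if `W_{A_N} + D ⊆ D`. -/
def Exchangeable (X : Type*) (N : ℕ) (D : Set ((Fin N → X) → ℝ)) : Prop :=
  ∀ f ∈ WA X N, ∀ g ∈ D, f + g ∈ D

/-! Since `ex^N` is linear, `ex^N f = ex^N g` puts `f - g` in `W_{A_N}`, so exchangeability
turns `g ∈ D` into `f = (f - g) + g ∈ D`, and symmetrically. Part (i) is the case
`g = ex^N f`, because `ex^N` is idempotent: it averages a function that is already
permutation invariant. -/

lemma exg_sub {X : Type*} {N : ℕ} (f g : (Fin N → X) → ℝ) :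
    exg N (f - g) = exg N f - exg N g := by
  funext x
  simp only [exg, Pi.sub_apply, Finset.sum_sub_distrib, sub_div]

lemma exg_comp_perm {X : Type*} {N : ℕ} (f : (Fin N → X) → ℝ) (x : Fin N → X)
    (π : Equiv.Perm (Fin N)) : exg N f (x ∘ π) = exg N f x := by
  simp only [exg]
  congr 1
  exact Equiv.sum_comp (Equiv.mulLeft π) (fun σ => f (x ∘ σ))

lemma exg_exg {X : Type*} {N : ℕ} (f : (Fin N → X) → ℝ) : exg N (exg N f) = exg N f := by
  funext x
  calc exg N (exg N f) x
      = (∑ _π : Equiv.Perm (Fin N), exg N f x) / (N.factorial : ℝ) := by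
        show (∑ π : Equiv.Perm (Fin N), exg N f (x ∘ π)) / _ = _
        simp only [exg_comp_perm]
    _ = exg N f x := by
        rw [Finset.sum_const, Finset.card_univ, Fintype.card_perm, Fintype.card_fin, nsmul_eq_mul]
        field_simp

lemma Exchangeable.mem_of_exg_eq {X : Type*} {N : ℕ} {D : Set ((Fin N → X) → ℝ)}
    (hD : Exchangeable X N D) {f g : (Fin N → X) → ℝ} (hfg : exg N f = exg N g) (hg : g ∈ D) :
    f ∈ D := by
  have hmem : f - g ∈ WA X N := by simp [WA, exg_sub, hfg]
  simpa using hD _ hmem g hg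

lemma Exchangeable.mem_iff_of_exg_eq {X : Type*} {N : ℕ} {D : Set ((Fin N → X) → ℝ)}
    (hD : Exchangeable X N D) {f g : (Fin N → X) → ℝ} (hfg : exg N f = exg N g) :
    f ∈ D ↔ g ∈ D :=
  ⟨hD.mem_of_exg_eq hfg.symm, hD.mem_of_exg_eq hfg⟩

theorem exchangeability_via_ex_general {N : ℕ}
    (D : Set ((Fin N → X) → ℝ)) (hexch : Exchangeable X N D) :
    (∀ f : (Fin N → X) → ℝ, (f ∈ D ↔ exg N f ∈ D)) ∧
    ∀ f f' : (Fin N → X) → ℝ, exg N f = exg N f' → (f ∈ D ↔ f' ∈ D) :=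
  ⟨fun f => hexch.mem_iff_of_exg_eq (exg_exg f).symm, fun _ _ => hexch.mem_iff_of_exg_eq⟩

theorem exchangeability_via_ex {N : ℕ} (hN : 1 ≤ N)
    (D : Set ((Fin N → X) → ℝ)) (hcoh : Coherent D) (hexch : Exchangeable X N D) :
    (∀ f : (Fin N → X) → ℝ, (f ∈ D ↔ exg N f ∈ D)) ∧
    ∀ f f' : (Fin N → X) → ℝ, exg N f = exg N f' → (f ∈ D ↔ f' ∈ D) :=
  exchangeability_via_ex_general D hexch
end

section
/- Say a set A ⊆ G(X^N) avoids non-positivity under exchangeability if the set ({f ∈ G(X^N) : f > 0} ∪ A) + W_{A_N} avoids non-positivity, i.e., no element of posi(({f > 0} ∪ A) + W_{A_N}) is pointwise ≤ 0. Then: (i) the empty set avoids non-positivity under exchangeability; (ii) a nonempty set A ⊆ G(X^N) avoids non-positivity under exchangeability if and only if A + W_{A_N} avoids non-positivity (no element of posi(A + W_{A_N}) is pointwise ≤ 0). -/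
variable {X : Type*} [Fintype X] [DecidableEq X] [Nonempty X]

/-- The positive hull of a set of gambles: all finite strictly positive linear combinations. -/
def posi {Y : Type*} (A : Set (Y → ℝ)) : Set (Y → ℝ) :=
  {g | ∃ n : ℕ, 0 < n ∧ ∃ (c : Fin n → ℝ) (f : Fin n → Y → ℝ),
    (∀ k, 0 < c k) ∧ (∀ k, f k ∈ A) ∧ g = ∑ k, c k • f k}

open Pointwise

/-- `A` avoids non-positivity under exchangeability: no element of
`posi(({f > 0} ∪ A) + W_{A_N})` is pointwise `≤ 0`. -/
def ANPE (X : Type*) (N : ℕ) (A : Set ((Fin N → X) → ℝ)) : Prop :=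
  ∀ g ∈ posi (({f : (Fin N → X) → ℝ | 0 ≤ f ∧ f ≠ 0} ∪ A) + WA X N), ¬ g ≤ 0


/-! Because `W_{A_N}` is a linear subspace, adding an element of it to an element of
`posi(A + W_{A_N})` stays in `posi(A + W_{A_N})`. So the gambles of the form `p + w` with
`p > 0`, `w ∈ W_{A_N}`, together with those of the form `p + h` with `p ≥ 0`,
`h ∈ posi(A + W_{A_N})`, form a convex cone, and it contains `posi(({f > 0} ∪ A) + W_{A_N})`.
A gamble `p + w` of the first kind is never `≤ 0`, because `ex^N` vanishes on `W_{A_N}` and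
sends a nonzero nonnegative gamble to a nonzero nonnegative one. A gamble `p + h` of the second
kind is `≤ 0` only if `h ≤ 0`. Part (i) is the case `A = ∅`. -/

namespace ConvexCone

variable {𝕜 M : Type*}

section Union

variable [Semiring 𝕜] [PartialOrder 𝕜] [AddCommMonoid M] [SMul 𝕜 M]

def unionOfAddSubset (C₁ C₂ : ConvexCone 𝕜 M) (h : (C₁ : Set M) + C₂ ⊆ C₂) :
    ConvexCone 𝕜 M where
  carrier := C₁ ∪ C₂
  smul_mem' _ hc _ hx := hx.imp (C₁.smul_mem hc) (C₂.smul_mem hc)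
  add_mem' x hx y hy := by
    rcases hx with hx | hx <;> rcases hy with hy | hy
    · exact .inl (C₁.add_mem hx hy)
    · exact .inr (h (Set.add_mem_add hx hy))
    · exact .inr (add_comm x y ▸ h (Set.add_mem_add hy hx))
    · exact .inr (C₂.add_mem hx hy)

end Union

variable [DivisionRing 𝕜] [PartialOrder 𝕜] [AddCommGroup M] [Module 𝕜 M]
  {s : Set M} {W : Submodule 𝕜 M}

theorem add_mem_hull_add_submodule {x w : M} (hx : x ∈ hull 𝕜 (s + (W : Set M)))
    (hw : w ∈ W) : x + w ∈ hull 𝕜 (s + (W : Set M)) := by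
  let C : ConvexCone 𝕜 M :=
    { carrier := {x | ∀ w ∈ W, x + w ∈ hull 𝕜 (s + (W : Set M))}
      smul_mem' := fun c hc x hx w hw => by
        simpa [smul_add, smul_smul, hc.ne'] using
          (hull 𝕜 (s + (W : Set M))).smul_mem hc (hx (c⁻¹ • w) (W.smul_mem _ hw))
      add_mem' := fun x hx y hy w hw => by
        rw [add_right_comm]
        exact add_mem (hx w hw) (by simpa using hy 0 W.zero_mem) }
  have hsC : s + (W : Set M) ⊆ C := by
    rintro _ ⟨a, ha, v, hv, rfl⟩ w hw
    rw [add_assoc]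
    exact subset_hull (Set.add_mem_add ha (W.add_mem hv hw))
  exact hull_min hsC hx w hw

variable [PartialOrder M] [IsOrderedAddMonoid M] [PosSMulStrictMono 𝕜 M]

theorem not_nonpos_of_mem_hull_Ioi_union_add (hW : ∀ w ∈ W, ¬ 0 < w)
    (hs : ∀ x ∈ hull 𝕜 (s + (W : Set M)), ¬ x ≤ 0) {x : M}
    (hx : x ∈ hull 𝕜 ((Set.Ioi 0 ∪ s) + (W : Set M))) : ¬ x ≤ 0 := by
  have habsorb : (↑(strictlyPositive 𝕜 M + W.toConvexCone) : Set M) +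
      ↑(positive 𝕜 M + hull 𝕜 (s + (W : Set M))) ⊆
      ↑(positive 𝕜 M + hull 𝕜 (s + (W : Set M))) := by
    rintro _ ⟨_, ⟨p, hp, w, hw, rfl⟩, _, ⟨q, hq, y, hy, rfl⟩, rfl⟩
    refine ⟨p + q, add_nonneg (le_of_lt hp) hq, y + w, add_mem_hull_add_submodule hy hw, ?_⟩
    dsimp only
    abel
  have hsub : (Set.Ioi 0 ∪ s) + (W : Set M) ⊆ unionOfAddSubset _ _ habsorb := by
    rintro _ ⟨y, hy | hy, w, hw, rfl⟩
    · exact .inl ⟨y, hy, w, hw, rfl⟩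
    · exact .inr ⟨0, le_rfl, y + w, subset_hull (Set.add_mem_add hy hw), zero_add _⟩
  rcases hull_min hsub hx with ⟨p, hp, w, hw, rfl⟩ | ⟨p, hp, y, hy, rfl⟩ <;> intro hle
  · exact hW (-w) (W.neg_mem hw) (lt_of_lt_of_le hp (le_neg_iff_add_nonpos_right.mpr hle))
  · exact hs y hy (le_of_add_le_of_nonneg_right hle hp)

end ConvexCone

section Posi

variable {Y : Type*} {A : Set (Y → ℝ)} {g h : Y → ℝ}

theorem smul_mem_posi {c : ℝ} (hc : 0 < c) (hg : g ∈ posi A) : c • g ∈ posi A := by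
  obtain ⟨n, hn, d, f, hd, hf, rfl⟩ := hg
  exact ⟨n, hn, fun k => c * d k, f, fun k => mul_pos hc (hd k), hf, by
    simp [Finset.smul_sum, smul_smul]⟩

theorem add_mem_posi (hg : g ∈ posi A) (hh : h ∈ posi A) : g + h ∈ posi A := by
  obtain ⟨n, hn, c, f, hc, hf, rfl⟩ := hg
  obtain ⟨m, -, d, e, hd, he, rfl⟩ := hh
  exact ⟨n + m, by omega, Fin.append c d, Fin.append f e,
    Fin.addCases (by simpa using hc) (by simpa using hd),
    Fin.addCases (by simpa using hf) (by simpa using he), by simp [Fin.sum_univ_add]⟩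

theorem posi_eq_hull (A : Set (Y → ℝ)) : posi A = ConvexCone.hull ℝ A := by
  ext g
  constructor
  · rintro ⟨n, hn, c, f, hc, hf, rfl⟩
    exact Finset.sum_induction_nonempty _ (· ∈ ConvexCone.hull ℝ A) (fun _ _ => add_mem)
      (Finset.univ_nonempty_iff.mpr ⟨⟨0, hn⟩⟩)
      fun k _ => (ConvexCone.hull ℝ A).smul_mem (hc k) (ConvexCone.subset_hull (hf k))
  · let C : ConvexCone ℝ (Y → ℝ) :=
      ⟨posi A, fun _ hc _ hg => smul_mem_posi hc hg, fun _ hg _ hh => add_mem_posi hg hh⟩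
    exact fun hg => ConvexCone.hull_min (C := C)
      (fun f hf => ⟨1, one_pos, fun _ => 1, fun _ => f, fun _ => one_pos, fun _ => hf, by simp⟩)
      hg

theorem posi_mono {B : Set (Y → ℝ)} (hAB : A ⊆ B) : posi A ⊆ posi B := by
  rintro g ⟨n, hn, c, f, hc, hf, rfl⟩
  exact ⟨n, hn, c, f, hc, fun k => hAB (hf k), rfl⟩

@[simp]
theorem posi_empty : posi (∅ : Set (Y → ℝ)) = ∅ :=
  Set.eq_empty_of_forall_notMem fun _ ⟨_, hn, _, _, _, hf, _⟩ => hf ⟨0, hn⟩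

end Posi

section Exchangeability

variable {Y : Type*}

variable (Y) in
noncomputable def exgLinearMap (N : ℕ) : ((Fin N → Y) → ℝ) →ₗ[ℝ] ((Fin N → Y) → ℝ) where
  toFun := exg N
  map_add' f g := by
    ext x
    simp [exg, Finset.sum_add_distrib, add_div]
  map_smul' c f := by
    ext x
    simp [exg, ← Finset.mul_sum, mul_div_assoc]

theorem exg_pos {N : ℕ} {f : (Fin N → Y) → ℝ} (hf : 0 < f) : 0 < exg N f := by
  obtain ⟨hf0, x, hx⟩ := Pi.lt_def.mp hf
  have hsum : f x ≤ ∑ π : Equiv.Perm (Fin N), f (x ∘ π) :=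
    Finset.single_le_sum (f := fun π : Equiv.Perm (Fin N) => f (x ∘ π)) (fun π _ => hf0 _)
      (Finset.mem_univ 1)
  exact Pi.lt_def.mpr
    ⟨fun y => div_nonneg (Finset.sum_nonneg fun π _ => hf0 _) (Nat.cast_nonneg _),
      x, div_pos (hx.trans_le hsum) (by positivity)⟩

theorem not_pos_of_mem_WA {N : ℕ} {f : (Fin N → Y) → ℝ} (hf : f ∈ WA Y N) : ¬ 0 < f :=
  fun hpos => (exg_pos hpos).ne' hf

end Exchangeability

theorem avoiding_nonpositivity_under_exchangeability_general {N : ℕ} :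
    ANPE X N (∅ : Set ((Fin N → X) → ℝ)) ∧
    ∀ A : Set ((Fin N → X) → ℝ), A.Nonempty →
      (ANPE X N A ↔ ∀ g ∈ posi (A + WA X N), ¬ g ≤ 0) := by
  have hpos : {f : (Fin N → X) → ℝ | 0 ≤ f ∧ f ≠ 0} = Set.Ioi 0 :=
    Set.ext fun f => (lt_iff_le_and_ne.trans (and_congr_right' ne_comm)).symm
  have anpe_of : ∀ A : Set ((Fin N → X) → ℝ),
      (∀ g ∈ posi (A + WA X N), ¬ g ≤ 0) → ANPE X N A := by
    intro A hA g hg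
    rw [hpos, posi_eq_hull] at hg
    rw [posi_eq_hull] at hA
    exact ConvexCone.not_nonpos_of_mem_hull_Ioi_union_add (W := LinearMap.ker (exgLinearMap X N))
      (fun _ => not_pos_of_mem_WA) hA hg
  exact ⟨anpe_of ∅ (by simp), fun A _ => ⟨fun h g hg =>
    h g (posi_mono (Set.add_subset_add_right Set.subset_union_right) hg), anpe_of A⟩⟩

theorem avoiding_nonpositivity_under_exchangeability {N : ℕ} (hN : 1 ≤ N) :
    ANPE X N (∅ : Set ((Fin N → X) → ℝ)) ∧
    ∀ A : Set ((Fin N → X) → ℝ), A.Nonempty →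
      (ANPE X N A ↔ ∀ g ∈ posi (A + WA X N), ¬ g ≤ 0) :=
  avoiding_nonpositivity_under_exchangeability_general
end

section
/- Let D be a coherent and exchangeable set of gambles on X^N with count representation D_c := Hy^N(D). Let 1 ≤ ň < N, n̂ := N − ň, and m̌ ∈ N^ň_X. For a gamble f on X^n̂ let I_{E_m̌}f denote the gamble on X^N = X^ň × X^n̂ mapping (z,y) to f(y) if T^ň(z) = m̌ and to 0 otherwise, set D⌋m̌ := {f ∈ G(X^n̂) : I_{E_m̌}f ∈ D}, and let D_c⌋m̌ := Hy^n̂(D⌋m̌) be its count representation. Define the likelihood function L_m̌ : N^n̂_X → ℝ by L_m̌(m̂) := |[m̌]|·|[m̂]| / |[m̌+m̂]|, and the linear map +_m̌ : G(N^n̂_X) → G(N^N_X) by (+_m̌ g)(M) := g(M − m̌) if M ≥ m̌ componentwise and (+_m̌ g)(M) := 0 otherwise. Then D_c⌋m̌ = {g ∈ G(N^n̂_X) : +_m̌(L_m̌·g) ∈ D_c}, where L_m̌·g denotes the pointwise product. -/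
variable {X : Type*} [Fintype X] [DecidableEq X] [Nonempty X]

/-- The counting map: `countVec x z` is the number of indices `k` with `x k = z`. -/
def countVec {X : Type*} [Fintype X] [DecidableEq X] {n : ℕ} (x : Fin n → X) : X → ℕ :=
  fun z => (Finset.univ.filter fun k => x k = z).card

lemma sum_countVec {X : Type*} [Fintype X] [DecidableEq X] {n : ℕ} (x : Fin n → X) :
    ∑ z, countVec x z = n := by
  classical
  have h := Finset.card_eq_sum_card_fiberwise
    (s := (Finset.univ : Finset (Fin n))) (t := (Finset.univ : Finset X))
    (f := x) (fun a _ => Finset.mem_univ _)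
  simpa [countVec, Finset.card_fin] using h.symm

/-- `N^N_X`: the set of count vectors, i.e. maps `m : X → ℕ` with `∑ m = N`. -/
abbrev CV (X : Type*) [Fintype X] (N : ℕ) := {m : X → ℕ // ∑ z, m z = N}

/-- The counting map `T^N : X^N → N^N_X`. -/
def Tmap {X : Type*} [Fintype X] [DecidableEq X] {N : ℕ} (x : Fin N → X) : CV X N :=
  ⟨countVec x, sum_countVec x⟩

/-- `Hy^N(f)`: the count gamble `m ↦ (1/|[m]|) ∑_{y ∈ [m]} f(y)`, where
`[m]` is the set of sequences with count vector `m`. -/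
noncomputable def hy {X : Type*} [Fintype X] [DecidableEq X] {N : ℕ}
    (f : (Fin N → X) → ℝ) : CV X N → ℝ :=
  fun m => (∑ y ∈ Finset.univ.filter (fun x : Fin N → X => Tmap x = m), f y) /
    ((Finset.univ.filter (fun x : Fin N → X => Tmap x = m)).card : ℝ)

/-- The first `nc` coordinates of a sequence in `X^(nc + nh)`. -/
def firstPart {X : Type*} {nc nh : ℕ} (w : Fin (nc + nh) → X) : Fin nc → X :=
  fun i => w (Fin.castAdd nh i)

/-- The last `nh` coordinates of a sequence in `X^(nc + nh)`. -/
def lastPart {X : Type*} {nc nh : ℕ} (w : Fin (nc + nh) → X) : Fin nh → X :=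
  fun j => w (Fin.natAdd nc j)

/-- `I_{E_m̌} f`: the gamble on `X^(nc+nh)` equal to `f` on the last `nh` coordinates
when the count vector of the first `nc` coordinates is `m̌`, and `0` otherwise. -/
def IEm {X : Type*} [Fintype X] [DecidableEq X] {nc nh : ℕ} (mc : X → ℕ)
    (f : (Fin nh → X) → ℝ) : (Fin (nc + nh) → X) → ℝ :=
  fun w => if countVec (firstPart w) = mc then f (lastPart w) else 0

/-- `|[m]|`: the number of sequences in `X^n` with count vector `m`. -/
def atomCard (X : Type*) [Fintype X] [DecidableEq X] (n : ℕ) (m : X → ℕ) : ℕ :=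
  (Finset.univ.filter fun x : Fin n → X => countVec x = m).card

/-- The likelihood function `L_m̌(m̂) = |[m̌]|·|[m̂]| / |[m̌+m̂]|` associated with
sampling without replacement. -/
noncomputable def Lik (X : Type*) [Fintype X] [DecidableEq X] (nc nh : ℕ)
    (mc mh : X → ℕ) : ℝ :=
  ((atomCard X nc mc : ℝ) * (atomCard X nh mh : ℝ)) / (atomCard X (nc + nh) (mc + mh) : ℝ)

/-- The map `+_m̌` taking a count gamble `g` on `N^n̂_X` to the count gamble on
`N^(ň+n̂)_X` with value `g(M - m̌)` if `M ≥ m̌` componentwise, and `0` otherwise. -/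
noncomputable def plusm {X : Type*} [Fintype X] [DecidableEq X] {nc nh : ℕ}
    (mc : CV X nc) (g : CV X nh → ℝ) : CV X (nc + nh) → ℝ :=
  fun M =>
    if h : ∀ z, mc.1 z ≤ M.1 z then
      g ⟨fun z => M.1 z - mc.1 z, by
        have h1 : ∑ z, (M.1 z - mc.1 z + mc.1 z) = ∑ z, M.1 z :=
          Finset.sum_congr rfl fun z _ => Nat.sub_add_cancel (h z)
        have h2 : ∑ z, (M.1 z - mc.1 z + mc.1 z) =
            ∑ z, (M.1 z - mc.1 z) + ∑ z, mc.1 z := Finset.sum_add_distrib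
        have h3 := M.2
        have h4 := mc.2
        show ∑ z, (M.1 z - mc.1 z) = nh
        omega⟩
    else 0

/-!
If `M = m̌ + m̂`, the sequences in the atom `[M]` whose first `ň` coordinates have counts `m̌` are
exactly the concatenations of `[m̌] × [m̂]`; averaging `I_{E_m̌} f` over `[M]` therefore gives
`Hy(I_{E_m̌} f) = +_m̌ (L_m̌ · Hy f)`, and `Hy(I_{E_m̌} f)` vanishes on the other atoms. This gives `⊆`.
Conversely, the permuted copies of a sequence run uniformly over its atom, so `ex^N f = Hy f ∘ T`, and
two gambles with the same image under `Hy` differ by an element of `W_{A_N}`. Given `g` in the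
right-hand side, `I_{E_m̌}(g ∘ T)` has the same image under `Hy` as some `F ∈ D`, so it lies in `D`
by exchangeability.
-/

open Finset

section Counting

variable {X : Type*} [Fintype X] [DecidableEq X] {n : ℕ}

def atom (n : ℕ) (m : X → ℕ) : Finset (Fin n → X) :=
  univ.filter fun x => countVec x = m

lemma mem_atom {m : X → ℕ} {x : Fin n → X} : x ∈ atom n m ↔ countVec x = m := by
  simp [atom]

lemma card_atom (m : X → ℕ) : #(atom n m) = atomCard X n m := rfl

lemma countVec_apply_eq_card (x : Fin n → X) (z : X) :
    countVec x z = Fintype.card {k // x k = z} :=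
  (Fintype.card_subtype _).symm

lemma countVec_comp_perm (x : Fin n → X) (σ : Equiv.Perm (Fin n)) :
    countVec (x ∘ σ) = countVec x := by
  funext z
  rw [countVec_apply_eq_card, countVec_apply_eq_card]
  exact Fintype.card_congr (σ.subtypeEquiv fun _ => Iff.rfl)

lemma countVec_append {nc nh : ℕ} (u : Fin nc → X) (v : Fin nh → X) :
    countVec (Fin.append u v) = countVec u + countVec v := by
  funext z
  simp only [countVec, card_filter, Fin.sum_univ_add, Fin.append_left, Fin.append_right,
    Pi.add_apply]

lemma countVec_eq_firstPart_add_lastPart {nc nh : ℕ} (w : Fin (nc + nh) → X) :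
    countVec w = countVec (firstPart w) + countVec (lastPart w) := by
  conv_lhs => rw [← Fin.append_castAdd_natAdd (f := w)]
  exact countVec_append _ _

lemma exists_countVec_eq (m : CV X n) : ∃ x : Fin n → X, countVec x = m.1 := by
  have hcard : Fintype.card (Σ z, Fin (m.1 z)) = n := by simp [m.2]
  let e := Fintype.equivFinOfCardEq hcard
  refine ⟨fun k => (e.symm k).1, funext fun z => ?_⟩
  rw [countVec_apply_eq_card, ← Fintype.card_fin (m.1 z)]
  exact Fintype.card_congr ((e.symm.subtypeEquiv fun _ => Iff.rfl).trans (Equiv.sigmaSubtype z))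

lemma exists_perm_comp_eq_of_countVec_eq {x y : Fin n → X} (h : countVec x = countVec y) :
    ∃ σ : Equiv.Perm (Fin n), y ∘ σ = x := by
  have hfiber (z : X) : Fintype.card {k // x k = z} = Fintype.card {k // y k = z} := by
    rw [← countVec_apply_eq_card, ← countVec_apply_eq_card, h]
  exact ⟨Equiv.ofFiberEquiv fun z => Fintype.equivOfCardEq (hfiber z),
    funext (Equiv.ofFiberEquiv_map _)⟩

lemma atomCard_pos (m : CV X n) : 0 < atomCard X n m.1 := by
  obtain ⟨x, hx⟩ := exists_countVec_eq m
  exact card_pos.mpr ⟨x, mem_atom.mpr hx⟩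

lemma hy_apply (f : (Fin n → X) → ℝ) (m : CV X n) :
    hy f m = (∑ y ∈ atom n m.1, f y) / atomCard X n m.1 := by
  simp only [hy, atom, atomCard, Tmap, Subtype.ext_iff]

lemma hy_comp_Tmap (g : CV X n → ℝ) : hy (g ∘ Tmap) = g := by
  funext m
  have hsum : ∑ y ∈ atom n m.1, g (Tmap y) = atomCard X n m.1 * g m := by
    rw [sum_congr rfl (g := fun _ => g m) fun y hy => congrArg g (Subtype.ext (mem_atom.mp hy)),
      sum_const, nsmul_eq_mul]
    rfl
  have hpos : (0 : ℝ) < atomCard X n m.1 := by exact_mod_cast atomCard_pos m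
  rw [hy_apply, Function.comp_def, hsum, mul_div_cancel_left₀ _ hpos.ne']

lemma sum_perm_comp_eq_of_countVec_eq (h : (Fin n → X) → ℝ) {x y : Fin n → X}
    (hxy : countVec x = countVec y) :
    ∑ π : Equiv.Perm (Fin n), h (x ∘ π) = ∑ π : Equiv.Perm (Fin n), h (y ∘ π) := by
  obtain ⟨σ, rfl⟩ := exists_perm_comp_eq_of_countVec_eq hxy
  exact Equiv.sum_comp (Equiv.mulLeft σ) (fun π => h (y ∘ π))

lemma sum_atom_comp_perm (h : (Fin n → X) → ℝ) (m : X → ℕ) (π : Equiv.Perm (Fin n)) :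
    ∑ y ∈ atom n m, h (y ∘ π) = ∑ y ∈ atom n m, h y :=
  sum_equiv (Equiv.arrowCongr π.symm (Equiv.refl X))
    (fun y => by rw [mem_atom, mem_atom, ← countVec_comp_perm y π]; rfl) (fun _ _ => rfl)

lemma exg_eq_hy_Tmap (h : (Fin n → X) → ℝ) (x : Fin n → X) : exg n h x = hy h (Tmap x) := by
  set A := atom n (countVec x)
  have hdouble : (∑ π : Equiv.Perm (Fin n), h (x ∘ π)) * #A = (∑ y ∈ A, h y) * n.factorial := by
    calc (∑ π : Equiv.Perm (Fin n), h (x ∘ π)) * #A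
        = ∑ y ∈ A, ∑ π : Equiv.Perm (Fin n), h (y ∘ π) := by
          rw [mul_comm, ← nsmul_eq_mul, ← sum_const]
          exact sum_congr rfl fun y hy =>
            sum_perm_comp_eq_of_countVec_eq h (mem_atom.mp hy).symm
      _ = ∑ π : Equiv.Perm (Fin n), ∑ y ∈ A, h y := by
          rw [sum_comm]
          exact sum_congr rfl fun π _ => sum_atom_comp_perm h _ π
      _ = (∑ y ∈ A, h y) * n.factorial := by
          rw [sum_const, card_univ, Fintype.card_perm, Fintype.card_fin, nsmul_eq_mul, mul_comm]
  have hA : (#A : ℝ) ≠ 0 := by exact_mod_cast (atomCard_pos (Tmap x)).ne'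
  rw [exg, hy_apply]
  exact (div_eq_div_iff (by positivity) hA).mpr hdouble

lemma sub_mem_WA_of_hy_eq {F G : (Fin n → X) → ℝ} (h : hy F = hy G) : F - G ∈ WA X n := by
  funext x
  simp only [exg, Pi.sub_apply, sum_sub_distrib, sub_div]
  rw [← exg, ← exg, exg_eq_hy_Tmap, exg_eq_hy_Tmap, h, sub_self, Pi.zero_apply]

end Counting

section Updating

variable {X : Type*} [Fintype X] [DecidableEq X] {nc nh : ℕ}

lemma sum_atom_add_IEm (mc mh : X → ℕ) (f : (Fin nh → X) → ℝ) :
    ∑ w ∈ atom (nc + nh) (mc + mh), IEm mc f w = atomCard X nc mc * ∑ v ∈ atom nh mh, f v := by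
  have hsplit (w : Fin (nc + nh) → X) :
      w ∈ (atom (nc + nh) (mc + mh)).filter (fun w => countVec (firstPart w) = mc) ↔
        (Fin.appendEquiv nc nh).symm w ∈ atom nc mc ×ˢ atom nh mh := by
    rw [mem_filter, mem_product, mem_atom, mem_atom, mem_atom, countVec_eq_firstPart_add_lastPart w]
    change _ ↔ countVec (firstPart w) = mc ∧ countVec (lastPart w) = mh
    constructor
    · rintro ⟨hsum, rfl⟩
      exact ⟨rfl, add_left_cancel hsum⟩
    · rintro ⟨hu, hv⟩
      exact ⟨by rw [hu, hv], hu⟩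
  calc ∑ w ∈ atom (nc + nh) (mc + mh), IEm mc f w
      = ∑ w ∈ (atom (nc + nh) (mc + mh)).filter (fun w => countVec (firstPart w) = mc),
          f (lastPart w) := by rw [sum_filter]; rfl
    _ = ∑ p ∈ atom nc mc ×ˢ atom nh mh, f p.2 := sum_equiv _ hsplit fun _ _ => rfl
    _ = atomCard X nc mc * ∑ v ∈ atom nh mh, f v := by
        simp only [sum_product, sum_const, nsmul_eq_mul, card_atom]

lemma IEm_eq_zero_of_not_le {mc : X → ℕ} {w : Fin (nc + nh) → X}
    (h : ¬ ∀ z, mc z ≤ countVec w z) (f : (Fin nh → X) → ℝ) : IEm mc f w = 0 := by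
  refine if_neg fun hmc => h fun z => ?_
  rw [countVec_eq_firstPart_add_lastPart, hmc]
  exact Nat.le_add_right _ _

lemma hy_IEm_of_add_eq (mc : CV X nc) (f : (Fin nh → X) → ℝ) {mh : CV X nh}
    {M : CV X (nc + nh)} (h : mc.1 + mh.1 = M.1) :
    hy (IEm mc.1 f) M = Lik X nc nh mc.1 mh.1 * hy f mh := by
  have hmh : (0 : ℝ) < atomCard X nh mh.1 := by exact_mod_cast atomCard_pos mh
  rw [hy_apply, hy_apply, Lik, ← h, sum_atom_add_IEm]
  field_simp

lemma hy_IEm (mc : CV X nc) (f : (Fin nh → X) → ℝ) :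
    hy (IEm mc.1 f) = plusm mc (fun mh => Lik X nc nh mc.1 mh.1 * hy f mh) := by
  funext M
  unfold plusm
  split_ifs with hle
  · exact hy_IEm_of_add_eq mc f (funext fun z => Nat.add_sub_cancel' (hle z))
  · rw [hy_apply, sum_eq_zero fun w hw => IEm_eq_zero_of_not_le (by rwa [mem_atom.mp hw]) f,
      zero_div]

end Updating

theorem updating_and_count_representation_general {nc nh : ℕ}
    (mc : CV X nc) (D : Set ((Fin (nc + nh) → X) → ℝ))
    (hexch : Exchangeable X (nc + nh) D) :
    hy '' {f : (Fin nh → X) → ℝ | IEm mc.1 f ∈ D} =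
      {g : CV X nh → ℝ |
        plusm mc (fun mh => Lik X nc nh mc.1 mh.1 * g mh) ∈ hy '' D} := by
  ext g
  constructor
  · rintro ⟨f, hf, rfl⟩
    exact ⟨IEm mc.1 f, hf, hy_IEm mc f⟩
  · rintro ⟨F, hF, hFg⟩
    refine ⟨g ∘ Tmap, ?_, hy_comp_Tmap g⟩
    have hsame : hy (IEm mc.1 (g ∘ Tmap)) = hy F := by rw [hy_IEm, hy_comp_Tmap, hFg]
    simpa using hexch _ (sub_mem_WA_of_hy_eq hsame) F hF

theorem updating_and_count_representation {nc nh : ℕ} (hnc : 1 ≤ nc) (hnh : 1 ≤ nh)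
    (mc : CV X nc) (D : Set ((Fin (nc + nh) → X) → ℝ))
    (hcoh : Coherent D) (hexch : Exchangeable X (nc + nh) D) :
    hy '' {f : (Fin nh → X) → ℝ | IEm mc.1 f ∈ D} =
      {g : CV X nh → ℝ |
        plusm mc (fun mh => Lik X nc nh mc.1 mh.1 * g mh) ∈ hy '' D} :=
  updating_and_count_representation_general mc D hexch
end
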